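/- With notation as follows: l càdlàg periodic of period t, U^ε a finite union of open sets each with m-null boundary where m is the occupation measure of l, A^ε_u = ∫_0^u 1_{l(s)∈U^ε} ds and σ^ε its right-continuous inverse. If a decreasing sequence ε_k → 0 is such that m((U^{ε_k})^c) → 0, then σ^{ε_k}_s → s as k → ∞, uniformly on compact subsets of ℝ_+. -/

import Mathlib

open scoped Classical

open Filter Topology MeasureTheory Set

/-!
The time spent in `U^ε` up to `u` is at most `u`, and by periodicity the time spent outside it
is at most `(u / t + 1) d`, where `d = m((U^ε)ᶜ)`. Hence `(1 - d / t) u - d ≤ A^ε_u ≤ u`, and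
inverting gives `s ≤ σ^ε_s ≤ (s + d) / (1 - d / t)`, a bound that tends to `s` uniformly on
bounded sets as `d → 0`.
-/

theorem tendsto_floor_mul_add_one_div_nhdsGT (x : ℝ) :
    Tendsto (fun n : ℕ => (⌊x * (n + 1)⌋ + 1) / ((n : ℝ) + 1)) atTop (𝓝[>] x) := by
  have hpos : ∀ n : ℕ, (0 : ℝ) < n + 1 := fun n => by positivity
  have hlt : ∀ n : ℕ, x < (⌊x * (n + 1)⌋ + 1) / ((n : ℝ) + 1) := fun n => by
    rw [lt_div_iff₀ (hpos n)]
    exact Int.lt_floor_add_one _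
  have hle : ∀ n : ℕ, (⌊x * (n + 1)⌋ + 1) / ((n : ℝ) + 1) ≤ x + 1 / ((n : ℝ) + 1) := fun n => by
    rw [div_le_iff₀ (hpos n), add_mul, one_div_mul_cancel (hpos n).ne']
    gcongr
    exact Int.floor_le _
  refine tendsto_nhdsWithin_iff.2 ⟨tendsto_of_tendsto_of_tendsto_of_le_of_le tendsto_const_nhds
    ?_ (fun n => (hlt n).le) hle, .of_forall hlt⟩
  simpa using (tendsto_const_nhds (x := x)).add tendsto_one_div_add_atTop_nhds_zero_nat

theorem measurable_of_continuousWithinAt_Ioi {X : Type*} [TopologicalSpace X]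
    [TopologicalSpace.PseudoMetrizableSpace X] [MeasurableSpace X] [BorelSpace X] {f : ℝ → X}
    (hf : ∀ x, ContinuousWithinAt f (Ioi x) x) : Measurable f := by
  refine measurable_of_tendsto_metrizable
    (f := fun (n : ℕ) (x : ℝ) => f ((⌊x * (n + 1)⌋ + 1) / ((n : ℝ) + 1))) (fun n => ?_)
    (tendsto_pi_nhds.2 fun x => (hf x).tendsto.comp (tendsto_floor_mul_add_one_div_nhdsGT x))
  exact (measurable_from_top (f := fun z : ℤ => f ((z + 1) / ((n : ℝ) + 1)))).comp
    (measurable_id.mul_const _).floor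

theorem IsOpen.measurableSet_preimage_of_continuousWithinAt_Ioi {X : Type*} [TopologicalSpace X]
    [TopologicalSpace.PseudoMetrizableSpace X] {f : ℝ → X}
    (hf : ∀ x, ContinuousWithinAt f (Ioi x) x) {U : Set X} (hU : IsOpen U) : MeasurableSet (f ⁻¹' U) := by
  borelize X
  exact measurable_of_continuousWithinAt_Ioi hf hU.measurableSet

theorem tendstoUniformlyOn_of_eventually_dist_le {ι α β : Type*} [PseudoMetricSpace β]
    {F : ι → α → β} {f : α → β} {p : Filter ι} {K : Set α} {b : ι → ℝ}
    (hb : Tendsto b p (𝓝 0)) (h : ∀ᶠ i in p, ∀ x ∈ K, dist (f x) (F i x) ≤ b i) :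
    TendstoUniformlyOn F f p K := by
  rw [Metric.tendstoUniformlyOn_iff]
  intro ε hε
  filter_upwards [h, hb.eventually (gt_mem_nhds hε)] with i hi hbi x hx
  exact (hi x hx).trans_lt hbi

theorem Function.Periodic.intervalIntegral_le_div_add_one_mul {g : ℝ → ℝ} {t u : ℝ}
    (hg : Function.Periodic g t) (ht : 0 < t) (hg0 : 0 ≤ g)
    (hint : IntervalIntegrable g volume 0 t) (hu : 0 ≤ u) :
    ∫ s in (0 : ℝ)..u, g s ≤ (u / t + 1) * ∫ s in (0 : ℝ)..t, g s := by
  have hint' := hg.intervalIntegrable₀ ht.ne' hint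
  set n := ⌈u / t⌉₊
  calc ∫ s in (0 : ℝ)..u, g s ≤ ∫ s in (0 : ℝ)..n * t, g s :=
        intervalIntegral.integral_mono_interval le_rfl hu
          ((div_le_iff₀ ht).1 (Nat.le_ceil _)) (.of_forall hg0) (hint' 0 _)
    _ = n * ∫ s in (0 : ℝ)..t, g s := by
        simpa [zsmul_eq_mul] using hg.intervalIntegral_add_zsmul_eq n 0 hint'
    _ ≤ (u / t + 1) * ∫ s in (0 : ℝ)..t, g s := by
        gcongr
        · exact intervalIntegral.integral_nonneg ht.le fun s _ => hg0 s
        · exact (Nat.ceil_lt_add_one (by positivity)).le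

noncomputable def occupationTime (E : Set ℝ) (u : ℝ) : ℝ :=
  ∫ s in (0 : ℝ)..u, if s ∈ E then (1 : ℝ) else 0

section occupationTime

variable {E : Set ℝ} {t u : ℝ}

theorem intervalIntegrable_ite_mem (hE : MeasurableSet E) (a b : ℝ) :
    IntervalIntegrable (fun s => if s ∈ E then (1 : ℝ) else 0) volume a b :=
  (intervalIntegrable_const (c := (1 : ℝ))).mono_fun'
    (Measurable.ite hE measurable_const measurable_const).aestronglyMeasurable
    (ae_of_all _ fun s => by dsimp only; split_ifs <;> simp)

theorem occupationTime_nonneg (hu : 0 ≤ u) : 0 ≤ occupationTime E u :=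
  intervalIntegral.integral_nonneg hu fun s _ => by split_ifs <;> norm_num

theorem occupationTime_add_compl (hE : MeasurableSet E) (u : ℝ) :
    occupationTime E u + occupationTime Eᶜ u = u := by
  unfold occupationTime
  rw [← intervalIntegral.integral_add (intervalIntegrable_ite_mem hE 0 u)
    (intervalIntegrable_ite_mem hE.compl 0 u)]
  rw [intervalIntegral.integral_congr (g := fun _ => (1 : ℝ)) fun s _ => ?_]
  · simp
  · by_cases hs : s ∈ E <;> simp [hs]

theorem occupationTime_le (hE : MeasurableSet E) (hu : 0 ≤ u) : occupationTime E u ≤ u := by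
  linarith [occupationTime_add_compl hE u, occupationTime_nonneg (E := Eᶜ) hu]

theorem occupationTime_le_of_periodic (hE : MeasurableSet E) (hper : ∀ s, s + t ∈ E ↔ s ∈ E)
    (ht : 0 < t) (hu : 0 ≤ u) : occupationTime E u ≤ (u / t + 1) * occupationTime E t :=
  Function.Periodic.intervalIntegral_le_div_add_one_mul (fun s => by simp only [hper]) ht
    (fun s => by dsimp only; split_ifs <;> norm_num) (intervalIntegrable_ite_mem hE 0 t) hu

theorem sub_le_occupationTime (hE : MeasurableSet E) (hper : ∀ s, s + t ∈ E ↔ s ∈ E)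
    (ht : 0 < t) (hu : 0 ≤ u) :
    (1 - occupationTime Eᶜ t / t) * u - occupationTime Eᶜ t ≤ occupationTime E u := by
  have hcompl := occupationTime_le_of_periodic hE.compl (fun s => not_congr (hper s)) ht hu
  have hsum := occupationTime_add_compl hE u
  calc (1 - occupationTime Eᶜ t / t) * u - occupationTime Eᶜ t
      = u - (u / t + 1) * occupationTime Eᶜ t := by ring
    _ ≤ occupationTime E u := by linarith

end occupationTime

theorem sInf_setOf_lt_mem_Icc {A : ℝ → ℝ} {a d s : ℝ} (ha : 0 < a) (hsd : 0 ≤ s + d)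
    (hle : ∀ u, 0 ≤ u → A u ≤ u) (hge : ∀ u, 0 ≤ u → a * u - d ≤ A u) :
    sInf {u | 0 ≤ u ∧ s < A u} ∈ Icc s ((s + d) / a) := by
  have hmem : ∀ u, (s + d) / a < u → u ∈ {u | 0 ≤ u ∧ s < A u} := fun u hu => by
    have h0 : 0 ≤ u := (div_nonneg hsd ha.le).trans hu.le
    have : s + d < a * u := (div_lt_iff₀' ha).1 hu
    exact ⟨h0, by linarith [hge u h0]⟩
  exact ⟨le_csInf ⟨_, hmem _ (lt_add_one _)⟩ fun u hu => (hu.2.trans_le (hle u hu.1)).le,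
    le_of_forall_gt_imp_ge_of_dense fun u hu => csInf_le ⟨0, fun _ h => h.1⟩ (hmem u hu)⟩

theorem dist_le_of_mem_Icc_div {a d s x M : ℝ} (ha : 0 < a) (ha1 : a ≤ 1) (hsM : s ≤ M)
    (hx : x ∈ Icc s ((s + d) / a)) : dist s x ≤ (M + d) / a - M := by
  rw [dist_comm, Real.dist_eq, abs_of_nonneg (sub_nonneg.2 hx.1)]
  have hMs : M - s ≤ (M - s) / a := le_div_self (sub_nonneg.2 hsM) ha ha1
  have hdiff : (M + d) / a - (s + d) / a = (M - s) / a := by rw [← sub_div]; ring_nf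
  linarith [hx.2]

theorem sigma_tendsto_uniformly_on_compacts_general
    {S : Type*} [MetricSpace S]
    (l : ℝ → S) (t : ℝ) (ht : 0 < t)
    (hper : ∀ s, l (s + t) = l s)
    (hrc : ∀ u, Tendsto l (𝓝[>] u) (𝓝 (l u)))
    (m : Set S → ℝ) (hm : ∀ B : Set S, m B = ∫ s in (0:ℝ)..t, (if l s ∈ B then (1:ℝ) else 0))
    (ε : ℕ → ℝ)
    (hε0 : Tendsto ε atTop (𝓝 0))
    (U : ℕ → Set S)
    (hUopen : ∀ k, ∃ (q : ℕ) (V : Fin q → Set S),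
        (∀ i, IsOpen (V i)) ∧ (∀ i, m (frontier (V i)) = 0) ∧ U k = ⋃ i, V i)
    (hUc : ∀ k, m (U k)ᶜ < 2 * ε k)
    (A : ℕ → ℝ → ℝ)
    (hA : ∀ k u, A k u = ∫ s in (0:ℝ)..u, (if l s ∈ U k then (1:ℝ) else 0))
    (σ : ℕ → ℝ → ℝ)
    (hσ : ∀ k s, σ k s = sInf {u : ℝ | 0 ≤ u ∧ s < A k u}) :
    ∀ K : Set ℝ, IsCompact K → K ⊆ Ici 0 →
      TendstoUniformlyOn (fun k s => σ k s) id atTop K := by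
  intro K hK hK0
  obtain ⟨M, hM⟩ := hK.bddAbove
  have hE : ∀ k, MeasurableSet (l ⁻¹' U k) := fun k => by
    obtain ⟨q, V, hV, -, hUV⟩ := hUopen k
    exact hUV ▸ (isOpen_iUnion hV).measurableSet_preimage_of_continuousWithinAt_Ioi hrc
  have hEper : ∀ k s, s + t ∈ l ⁻¹' U k ↔ s ∈ l ⁻¹' U k := fun k s => by
    simp only [mem_preimage, hper]
  have hmE : ∀ k, m (U k)ᶜ = occupationTime (l ⁻¹' U k)ᶜ t := fun k => hm _
  have hd0 : ∀ k, 0 ≤ m (U k)ᶜ := fun k => (hmE k).symm ▸ occupationTime_nonneg ht.le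
  have hd : Tendsto (fun k => m (U k)ᶜ) atTop (𝓝 0) :=
    squeeze_zero hd0 (fun k => (hUc k).le) (by simpa using hε0.const_mul 2)
  have hbound : ∀ k, m (U k)ᶜ < t →
      ∀ s ∈ K, dist (id s) (σ k s) ≤ (M + m (U k)ᶜ) / (1 - m (U k)ᶜ / t) - M := by
    intro k hk s hs
    rw [hmE] at hk ⊢
    have hc0 := occupationTime_nonneg (E := (l ⁻¹' U k)ᶜ) ht.le
    have ha : 0 < 1 - occupationTime (l ⁻¹' U k)ᶜ t / t := by rw [sub_pos, div_lt_one ht]; exact hk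
    refine dist_le_of_mem_Icc_div ha (sub_le_self _ (div_nonneg hc0 ht.le)) (hM hs) ?_
    rw [hσ, show A k = occupationTime (l ⁻¹' U k) from funext (hA k)]
    exact sInf_setOf_lt_mem_Icc ha (add_nonneg (hK0 hs) hc0)
      (fun u => occupationTime_le (hE k)) (fun u => sub_le_occupationTime (hE k) (hEper k) ht)
  refine tendstoUniformlyOn_of_eventually_dist_le ?_ ((hd.eventually (gt_mem_nhds ht)).mono hbound)
  simpa using (((tendsto_const_nhds (x := M)).add hd).div
    ((tendsto_const_nhds (x := (1 : ℝ))).sub (hd.div_const t)) (by simp)).sub_const M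

/-- If `U^{ε_k}` are finite unions of open sets with null boundary for the occupation
measure `m` of the càdlàg `t`-periodic path `l`, `ε_k ↓ 0` and `m((U^{ε_k})ᶜ) → 0`, then
the right-continuous inverses `σ^{ε_k}` of the occupation times `A^{ε_k}` converge to the
identity uniformly on compact subsets of `ℝ₊`. -/
theorem sigma_tendsto_uniformly_on_compacts
    {S : Type*} [MetricSpace S] [MeasurableSpace S] [BorelSpace S]
    (l : ℝ → S) (t : ℝ) (ht : 0 < t)
    (hper : ∀ s, l (s + t) = l s)
    (hrc : ∀ u, Tendsto l (𝓝[>] u) (𝓝 (l u)))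
    (hll : ∀ u, ∃ y, Tendsto l (𝓝[<] u) (𝓝 y))
    (m : Set S → ℝ) (hm : ∀ B : Set S, m B = ∫ s in (0:ℝ)..t, (if l s ∈ B then (1:ℝ) else 0))
    (ε : ℕ → ℝ) (hεpos : ∀ k, 0 < ε k) (hεanti : StrictAnti ε)
    (hε0 : Tendsto ε atTop (𝓝 0))
    (U : ℕ → Set S)
    (hUopen : ∀ k, ∃ (q : ℕ) (V : Fin q → Set S),
        (∀ i, IsOpen (V i)) ∧ (∀ i, m (frontier (V i)) = 0) ∧ U k = ⋃ i, V i)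
    (hUc : ∀ k, m (U k)ᶜ < 2 * ε k)
    (A : ℕ → ℝ → ℝ)
    (hA : ∀ k u, A k u = ∫ s in (0:ℝ)..u, (if l s ∈ U k then (1:ℝ) else 0))
    (σ : ℕ → ℝ → ℝ)
    (hσ : ∀ k s, σ k s = sInf {u : ℝ | 0 ≤ u ∧ s < A k u}) :
    ∀ K : Set ℝ, IsCompact K → K ⊆ Ici 0 →
      TendstoUniformlyOn (fun k s => σ k s) id atTop K :=
  sigma_tendsto_uniformly_on_compacts_general l t ht hper hrc m hm ε hε0 U hUopen hUc A hA σ hσ
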